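/- arXiv:2405.02275 — 4 statements merged into one kernel-verified Lean document; each statement's English description precedes it below -/
import Mathlib

section
/- Let S = k[x_{1,0},...,x_{1,n_1},...,x_{s,0},...,x_{s,n_s}] be the Cox ring of P^{n_1} × ... × P^{n_s} with deg(x_{i,j}) = e_i ∈ ℤ^s, and let I ⊆ S be a strongly multistable monomial ideal generated in degrees ≤ (a_1,...,a_s). For a monomial x^u of degree (a_1,...,a_s) and integers v_i ≥ a_i, let H(x^u) = { x^u · x^v : x^v has degree (v_1−a_1,...,v_s−a_s) and for every i, the minimal index j with x_{i,j} | x^v is ≥ the maximal index j with x_{i,j} | x^u }. Then the union of H(x^u) over all monomials x^u in I of degree (a_1,...,a_s) is a k-vector space basis (as a set of monomials) of the graded piece I_{(v_1,...,v_s)}; in particular the sets H(x^u) for distinct x^u are pairwise disjoint. -/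
open MvPolynomial

namespace Gotzmann

/-- Variable index set for the Cox ring of `P^{n 0} × ... × P^{n (s-1)}`:
the variable `x_{i,j}` is `⟨i, j⟩`. -/
abbrev PPVar (s : ℕ) (n : Fin s → ℕ) : Type := Σ i : Fin s, Fin (n i + 1)

/-- The multidegree of the variable `x_{i,j}` is the standard basis vector `e_i ∈ ℤ^s` (here
realised in `ℕ^s`). -/
def ppw (s : ℕ) (n : Fin s → ℕ) : PPVar s n → (Fin s → ℕ) :=
  fun v => Pi.single v.1 1

/-- Weighted degree of an exponent vector. -/
def wdeg {σ M : Type*} [AddCommMonoid M] (w : σ → M) (u : σ →₀ ℕ) : M :=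
  u.sum fun v e => e • w v

/-- Multigraded Hilbert function of `S/I` in degree `b`: the dimension of the image of the
degree-`b` part of `S` in `S/I`. -/
noncomputable def hilb (k : Type*) [Field k] {σ M : Type*} [AddCommMonoid M]
    (w : σ → M) (I : Ideal (MvPolynomial σ k)) (b : M) : ℕ :=
  Module.finrank k ((weightedHomogeneousSubmodule k w b).map
    (Ideal.Quotient.mkₐ k I).toLinearMap)

/-- An ideal homogeneous with respect to the grading by `w`. -/
def IsHomog {k : Type*} [Field k] {σ M : Type*} [AddCommMonoid M]
    (w : σ → M) (I : Ideal (MvPolynomial σ k)) : Prop :=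
  ∃ G : Set (MvPolynomial σ k),
    (∀ f ∈ G, ∃ d : M, f.IsWeightedHomogeneous w d) ∧ I = Ideal.span G

/-- A monomial ideal. -/
def IsMonomialIdeal {k : Type*} [Field k] {σ : Type*} (I : Ideal (MvPolynomial σ k)) : Prop :=
  ∃ A : Set (σ →₀ ℕ), I = Ideal.span ((fun u => (monomial u (1 : k))) '' A)

/-- Generated in degrees componentwise at most `a`. -/
def GenInDegLE {k : Type*} [Field k] {σ : Type*} {s : ℕ}
    (w : σ → (Fin s → ℕ)) (I : Ideal (MvPolynomial σ k)) (a : Fin s → ℕ) : Prop :=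
  ∃ G : Set (MvPolynomial σ k), I = Ideal.span G ∧
    ∀ f ∈ G, ∃ d : Fin s → ℕ, f.IsWeightedHomogeneous w d ∧ ∀ i, d i ≤ a i

/-- Generated in degrees at most `a` for the standard grading. -/
def GenInDegLE1 {k : Type*} [Field k] {σ : Type*}
    (I : Ideal (MvPolynomial σ k)) (a : ℕ) : Prop :=
  ∃ G : Set (MvPolynomial σ k), I = Ideal.span G ∧
    ∀ f ∈ G, ∃ d : ℕ, f.IsWeightedHomogeneous (fun _ : σ => (1 : ℕ)) d ∧ d ≤ a

/-- `P` is the (multigraded) Hilbert polynomial of `I`: it agrees with the Hilbert function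
for all multidegrees sufficiently deep in `ℕ^s`. -/
def IsHilbPoly (k : Type*) [Field k] {σ : Type*} {s : ℕ}
    (w : σ → (Fin s → ℕ)) (I : Ideal (MvPolynomial σ k))
    (P : MvPolynomial (Fin s) ℚ) : Prop :=
  ∃ N : ℕ, ∀ b : Fin s → ℕ, (∀ i, N ≤ b i) →
    eval (fun i => (b i : ℚ)) P = (hilb k w I b : ℚ)

/-- `P` is the Hilbert polynomial of the standard-graded ideal `I`. -/
def IsHilbPoly1 (k : Type*) [Field k] {σ : Type*}
    (I : Ideal (MvPolynomial σ k)) (P : Polynomial ℚ) : Prop :=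
  ∃ N : ℕ, ∀ b : ℕ, N ≤ b →
    P.eval (b : ℚ) = (hilb k (fun _ : σ => (1 : ℕ)) I b : ℚ)

/-- Hilbert polynomial for a `ℤ^s`-graded ring, agreement deep in `ℕ^s ⊆ ℤ^s`. -/
def IsHilbPolyZ (k : Type*) [Field k] {σ : Type*} {s : ℕ}
    (w : σ → (Fin s → ℤ)) (I : Ideal (MvPolynomial σ k))
    (P : MvPolynomial (Fin s) ℚ) : Prop :=
  ∃ N : ℕ, ∀ b : Fin s → ℕ, (∀ i, N ≤ b i) →
    eval (fun i => (b i : ℚ)) P = (hilb k w I (fun i => (b i : ℤ)) : ℚ)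

/-- A strongly multistable (monomial) ideal. -/
def StronglyMultistable {k : Type*} [Field k] {s : ℕ} {n : Fin s → ℕ}
    (I : Ideal (MvPolynomial (PPVar s n) k)) : Prop :=
  IsMonomialIdeal I ∧
    ∀ u : PPVar s n →₀ ℕ, (monomial u (1 : k)) ∈ I →
      ∀ (i : Fin s) (j j' : Fin (n i + 1)), j' < j → u ⟨i, j⟩ ≠ 0 →
        (monomial (u - Finsupp.single ⟨i, j⟩ 1 + Finsupp.single ⟨i, j'⟩ 1) (1 : k)) ∈ I

/-- A strongly multistable set of exponent vectors. -/
def StronglyMultistableSet {s : ℕ} {n : Fin s → ℕ} (M : Set (PPVar s n →₀ ℕ)) : Prop :=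
  ∀ u ∈ M, ∀ (i : Fin s) (j j' : Fin (n i + 1)), j' < j → u ⟨i, j⟩ ≠ 0 →
    u - Finsupp.single ⟨i, j⟩ 1 + Finsupp.single ⟨i, j'⟩ 1 ∈ M

/-- The part of an exponent vector supported on block `i`. -/
noncomputable def blockPart {s : ℕ} {n : Fin s → ℕ} (i : Fin s) (u : PPVar s n →₀ ℕ) :
    PPVar s n →₀ ℕ := u.filter fun v => v.1 = i

/-- The part of an exponent vector supported off block `i`. -/
noncomputable def offBlock {s : ℕ} {n : Fin s → ℕ} (i : Fin s) (u : PPVar s n →₀ ℕ) :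
    PPVar s n →₀ ℕ := u.filter fun v => v.1 ≠ i

/-- Exponent vectors supported on block `i` of total degree `d`
(monomials of degree `d·e_i`). -/
def blockMon {s : ℕ} {n : Fin s → ℕ} (i : Fin s) (d : ℕ) : Set (PPVar s n →₀ ℕ) :=
  {p | (∀ v ∈ p.support, v.1 = i) ∧ p.sum (fun _ e => e) = d}

/-- `blockLt i u v` : the block-`i` monomial of `v` is strictly larger than that of `u` in the
lexicographic order with `x_{i,0} ≻ x_{i,1} ≻ ⋯`. -/
def blockLt {s : ℕ} {n : Fin s → ℕ} (i : Fin s) (u v : PPVar s n →₀ ℕ) : Prop :=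
  Pi.Lex (· < ·) (fun {_} => (· < ·)) (fun j => u ⟨i, j⟩) (fun j => v ⟨i, j⟩)

/-- `M` is an `x_i`-lex set: replacing the block-`i` part of a member by any lexicographically
larger monomial of the same degree stays in `M`. -/
def IsXiLex {s : ℕ} {n : Fin s → ℕ} (i : Fin s) (M : Set (PPVar s n →₀ ℕ)) : Prop :=
  ∀ u ∈ M, ∀ p' : PPVar s n →₀ ℕ,
    (∀ v ∈ p'.support, v.1 = i) →
    p'.sum (fun _ e => e) = (blockPart i u).sum (fun _ e => e) →
    blockLt i (blockPart i u) p' →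
    offBlock i u + p' ∈ M

/-- The initial lexsegment of size `c` among block-`i` monomials of degree `d`. -/
noncomputable def lexSeg {s : ℕ} {n : Fin s → ℕ} (i : Fin s) (d c : ℕ) :
    Set (PPVar s n →₀ ℕ) :=
  {p ∈ blockMon i d | (blockMon (n := n) i d ∩ {p' | blockLt i p p'}).ncard < c}

/-- The operation `M ↦ M^{x_i lex}`: in each fibre over a fixed off-block-`i` part, replace the
set of block-`i` parts by the initial lexsegment of the same cardinality. -/
noncomputable def xiLexify {s : ℕ} {n : Fin s → ℕ} (i : Fin s)
    (M : Set (PPVar s n →₀ ℕ)) : Set (PPVar s n →₀ ℕ) :=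
  {w | ∃ u ∈ M, offBlock i w = offBlock i u ∧
        blockPart i w ∈ lexSeg i ((blockPart i u).sum fun _ e => e)
          ({p | p ∈ blockMon i ((blockPart i u).sum fun _ e => e) ∧
              offBlock i u + p ∈ M}).ncard}

/-- Successively apply `M ↦ M^{x_i lex}` for the first `t` blocks. -/
noncomputable def lexifyUpTo {s : ℕ} {n : Fin s → ℕ} (M : Set (PPVar s n →₀ ℕ)) :
    ℕ → Set (PPVar s n →₀ ℕ)
  | 0 => M
  | t + 1 => if h : t < s then xiLexify ⟨t, h⟩ (lexifyUpTo M t) else lexifyUpTo M t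

/-- `M^{multilex} = M^{x_1 lex ⋯ x_s lex}`. -/
noncomputable def multilexify {s : ℕ} {n : Fin s → ℕ} (M : Set (PPVar s n →₀ ℕ)) :
    Set (PPVar s n →₀ ℕ) := lexifyUpTo M s

/-- The exponent vectors of the monomials of `I` of multidegree `a`. -/
def monomialsOf {k : Type*} [Field k] {s : ℕ} {n : Fin s → ℕ}
    (I : Ideal (MvPolynomial (PPVar s n) k)) (a : Fin s → ℕ) : Set (PPVar s n →₀ ℕ) :=
  {u | wdeg (ppw s n) u = a ∧ (monomial u (1 : k)) ∈ I}

/-- A multilex (monomial) ideal. -/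
def IsMultilexIdeal {k : Type*} [Field k] {s : ℕ} {n : Fin s → ℕ}
    (I : Ideal (MvPolynomial (PPVar s n) k)) : Prop :=
  IsMonomialIdeal I ∧ ∀ (a : Fin s → ℕ) (i : Fin s), IsXiLex i (monomialsOf I a)

/-- `κ` encodes the `d`-th Macaulay representation of `α`:
`α = C(κ(d),d) + ⋯ + C(κ(1),1)` with `κ(d) > ⋯ > κ(1) ≥ 0`; here `κ j` is the paper's
`κ(j+1)`. -/
def IsMacaulayRep (d α : ℕ) (κ : Fin d → ℕ) : Prop :=
  StrictMono κ ∧ α = ∑ j : Fin d, Nat.choose (κ j) ((j : ℕ) + 1)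

/-- The Macaulay bound `α^{⟨d⟩}`. -/
noncomputable def macaulayBound (d α : ℕ) : ℕ :=
  letI := Classical.propDecidable (∃ κ : Fin d → ℕ, IsMacaulayRep d α κ)
  if h : ∃ κ : Fin d → ℕ, IsMacaulayRep d α κ
  then ∑ j : Fin d, Nat.choose (h.choose j + 1) ((j : ℕ) + 2)
  else 0

/-- Maximal growth of a Hilbert function in one direction: with
`H u = C(nv+u, nv)·q(u) + r(u)` the Euclidean division, `H (u+1) = C(nv+u+1,nv)·q(u) + r(u)^⟨u⟩`. -/
def growthStep (nv : ℕ) (H : ℕ → ℕ) (u : ℕ) : Prop :=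
  H (u + 1) =
    (nv + u + 1).choose nv * (H u / (nv + u).choose nv)
      + macaulayBound u (H u % (nv + u).choose nv)

/-- Hilbert polynomial for a `ℤ^s`-graded Cox ring, with agreement sufficiently far into the nef
cone, parameterised by nef classes `c i`. -/
def IsHilbPolyNef (k : Type*) [Field k] {σ : Type*} {s : ℕ}
    (w : σ → (Fin s → ℤ)) (c : Fin s → (Fin s → ℤ))
    (I : Ideal (MvPolynomial σ k)) (P : MvPolynomial (Fin s) ℚ) : Prop :=
  ∃ N : ℕ, ∀ b : Fin s → ℕ, (∀ i, N ≤ b i) →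
    eval (fun j => ((∑ i, (b i : ℤ) * c i j : ℤ) : ℚ)) P
      = (hilb k w I (fun j => ∑ i, (b i : ℤ) * c i j) : ℚ)

/-- The `ℤ²`-grading of the Cox ring of Kleinschmidt's Picard-rank-2 toric variety `X_d(a)`:
`deg z_i = (-a_i, 1)` for `1 ≤ i ≤ s`, `deg z_{s+1} = (0,1)`, `deg z_i = (1,0)` otherwise
(indices here are `0`-based). -/
def kw (d s : ℕ) (a : Fin s → ℕ) : Fin (d + 2) → (Fin 2 → ℤ) :=
  fun i => if h : (i : ℕ) < s then ![-(a ⟨i, h⟩ : ℤ), 1]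
    else if (i : ℕ) = s then ![0, 1] else ![1, 0]

/-- The set `H(x^u)` of Lemma 2.4: products `x^u · x^v` where `x^v` has multidegree `vdeg` and
each variable of block `i` occurring in `x^v` has index at least every index occurring in the
block-`i` part of `x^u` (that is, `m_i(x^v) ≥ m^i(x^u)`). -/
def Hset {s : ℕ} {n : Fin s → ℕ} (u : PPVar s n →₀ ℕ) (vdeg : Fin s → ℕ) :
    Set (PPVar s n →₀ ℕ) :=
  {wv | ∃ v : PPVar s n →₀ ℕ, wv = u + v ∧ wdeg (ppw s n) v = vdeg ∧
    ∀ (i : Fin s) (j j' : Fin (n i + 1)), v ⟨i, j⟩ ≠ 0 → u ⟨i, j'⟩ ≠ 0 → j' ≤ j}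

section Aux
variable {s : ℕ} {n : Fin s → ℕ}

def Bdeg (u : PPVar s n →₀ ℕ) (i : Fin s) : ℕ := ∑ j : Fin (n i + 1), u ⟨i, j⟩

def psum (u : PPVar s n →₀ ℕ) (i : Fin s) (m : ℕ) : ℕ :=
  ∑ j : Fin (n i + 1), if (j : ℕ) < m then u ⟨i, j⟩ else 0

lemma psum_zero (u : PPVar s n →₀ ℕ) (i : Fin s) : psum u i 0 = 0 := by
  simp [psum]

lemma psum_succ (u : PPVar s n →₀ ℕ) (i : Fin s) (m : ℕ) :
    psum u i (m + 1) = psum u i m + (if h : m < n i + 1 then u ⟨i, ⟨m, h⟩⟩ else 0) := by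
  unfold psum
  by_cases h : m < n i + 1
  · rw [dif_pos h]
    have : (∑ j : Fin (n i + 1), if (⟨m, h⟩ : Fin (n i + 1)) = j then u ⟨i, j⟩ else 0)
        = u ⟨i, ⟨m, h⟩⟩ := by
      rw [Finset.sum_ite_eq]; simp
    rw [← this, ← Finset.sum_add_distrib]
    apply Finset.sum_congr rfl
    intro j _
    by_cases hj : (j : ℕ) < m
    · rw [if_pos (by omega), if_pos hj, if_neg (by intro he; rw [← he] at hj; simp at hj), add_zero]
    · by_cases hje : (j : ℕ) = m
      · rw [if_pos (by omega), if_neg (by omega), if_pos (by apply Fin.ext; simp [hje]), zero_add]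
      · rw [if_neg (by omega), if_neg hj, if_neg (by intro he; rw [← he] at hje; simp at hje), add_zero]
  · rw [dif_neg h, add_zero]
    apply Finset.sum_congr rfl
    intro j _
    have h1 : (j : ℕ) < m := by omega
    rw [if_pos (by omega), if_pos h1]

lemma psum_mono (u : PPVar s n →₀ ℕ) (i : Fin s) {m m' : ℕ} (h : m ≤ m') :
    psum u i m ≤ psum u i m' := by
  apply Finset.sum_le_sum
  intro j _
  by_cases hj : (j : ℕ) < m
  · rw [if_pos hj, if_pos (by omega)]
  · rw [if_neg hj]; exact Nat.zero_le _

lemma psum_eq_B (u : PPVar s n →₀ ℕ) (i : Fin s) {m : ℕ} (h : n i + 1 ≤ m) :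
    psum u i m = Bdeg u i := by
  apply Finset.sum_congr rfl
  intro j _
  rw [if_pos (by omega)]

lemma psum_add (u v : PPVar s n →₀ ℕ) (i : Fin s) (m : ℕ) :
    psum (u + v) i m = psum u i m + psum v i m := by
  unfold psum
  rw [← Finset.sum_add_distrib]
  apply Finset.sum_congr rfl
  intro j _
  by_cases hj : (j : ℕ) < m <;> simp [hj]

lemma Bdeg_add (u v : PPVar s n →₀ ℕ) (i : Fin s) :
    Bdeg (u + v) i = Bdeg u i + Bdeg v i := by
  unfold Bdeg
  rw [← Finset.sum_add_distrib]
  apply Finset.sum_congr rfl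
  intro j _
  simp

lemma psum_congr {u u' : PPVar s n →₀ ℕ} {i : Fin s} {m : ℕ}
    (h : ∀ j : Fin (n i + 1), (j : ℕ) < m → u ⟨i, j⟩ = u' ⟨i, j⟩) :
    psum u i m = psum u' i m := by
  apply Finset.sum_congr rfl
  intro j _
  by_cases hj : (j : ℕ) < m
  · rw [if_pos hj, if_pos hj, h j hj]
  · rw [if_neg hj, if_neg hj]

lemma psum_fin_succ (u : PPVar s n →₀ ℕ) (i : Fin s) (j : Fin (n i + 1)) :
    psum u i ((j : ℕ) + 1) = psum u i (j : ℕ) + u ⟨i, j⟩ := by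
  rw [psum_succ, dif_pos j.isLt]

lemma psum_succ_le_B (u : PPVar s n →₀ ℕ) (i : Fin s) (j : Fin (n i + 1)) :
    psum u i (j : ℕ) + u ⟨i, j⟩ ≤ Bdeg u i := by
  rw [← psum_fin_succ]
  rw [← psum_eq_B u i (le_refl (n i + 1))]
  exact psum_mono u i (by omega)

noncomputable def trunc (w : PPVar s n →₀ ℕ) (a : Fin s → ℕ) : PPVar s n →₀ ℕ :=
  Finsupp.equivFunOnFinite.symm (fun x => min (w x) (a x.1 - psum w x.1 (x.2 : ℕ)))

lemma trunc_apply (w : PPVar s n →₀ ℕ) (a : Fin s → ℕ) (x : PPVar s n) :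
    trunc w a x = min (w x) (a x.1 - psum w x.1 (x.2 : ℕ)) := rfl

lemma trunc_apply' (w : PPVar s n →₀ ℕ) (a : Fin s → ℕ) (i : Fin s) (j : Fin (n i + 1)) :
    trunc w a ⟨i, j⟩ = min (w ⟨i, j⟩) (a i - psum w i (j : ℕ)) := rfl

lemma trunc_le (w : PPVar s n →₀ ℕ) (a : Fin s → ℕ) (x : PPVar s n) :
    trunc w a x ≤ w x := min_le_left _ _

lemma psum_trunc (w : PPVar s n →₀ ℕ) (a : Fin s → ℕ) (i : Fin s) (m : ℕ) :
    psum (trunc w a) i m = min (a i) (psum w i m) := by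
  induction m with
  | zero => simp [psum_zero]
  | succ m ih =>
    rw [psum_succ, psum_succ, ih]
    by_cases h : m < n i + 1
    · rw [dif_pos h, dif_pos h, trunc_apply']
      simp only [Fin.val_mk]
      rcases le_or_gt (a i) (psum w i m) with hc | hc
      · rw [min_eq_left hc]
        have h0 : a i - psum w i m = 0 := by omega
        rw [h0]
        simp only [Nat.min_zero, add_zero]
        rw [min_eq_left (by omega)]
      · rw [min_eq_right (by omega)]
        rcases le_or_gt (w ⟨i, ⟨m, h⟩⟩) (a i - psum w i m) with hd | hd
        · rw [min_eq_left hd, min_eq_right (by omega)]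
        · rw [min_eq_right (by omega), min_eq_left (by omega)]
          omega
    · rw [dif_neg h, dif_neg h, add_zero, add_zero]

lemma Bdeg_eq_psum (u : PPVar s n →₀ ℕ) (i : Fin s) : Bdeg u i = psum u i (n i + 1) :=
  (psum_eq_B u i (le_refl _)).symm

lemma Bdeg_trunc (w : PPVar s n →₀ ℕ) (a : Fin s → ℕ) (i : Fin s) (h : a i ≤ Bdeg w i) :
    Bdeg (trunc w a) i = a i := by
  rw [Bdeg_eq_psum, psum_trunc, ← Bdeg_eq_psum]
  exact min_eq_left h

lemma trunc_cond (w : PPVar s n →₀ ℕ) (a : Fin s → ℕ) (i : Fin s) (j j' : Fin (n i + 1))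
    (hj : (w - trunc w a) ⟨i, j⟩ ≠ 0) (hj' : trunc w a ⟨i, j'⟩ ≠ 0) : j' ≤ j := by
  by_contra hlt
  push_neg at hlt
  rw [trunc_apply'] at hj'
  have h1 : psum w i (j' : ℕ) < a i := by
    rcases Nat.eq_zero_or_pos (a i - psum w i (j' : ℕ)) with h | h
    · rw [h] at hj'; simp at hj'
    · omega
  have h2 : psum w i ((j : ℕ) + 1) ≤ psum w i (j' : ℕ) := psum_mono w i (by
    have : (j : ℕ) < (j' : ℕ) := hlt
    omega)
  rw [psum_fin_succ] at h2
  have h3 : trunc w a ⟨i, j⟩ = w ⟨i, j⟩ := by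
    rw [trunc_apply']
    exact min_eq_left (by omega)
  rw [Finsupp.tsub_apply, h3] at hj
  omega

/-- measure for the exchange argument -/
def phi (u : PPVar s n →₀ ℕ) : ℕ := ∑ x : PPVar s n, (x.2 : ℕ) * u x

lemma phi_add (u v : PPVar s n →₀ ℕ) : phi (u + v) = phi u + phi v := by
  unfold phi
  rw [← Finset.sum_add_distrib]
  apply Finset.sum_congr rfl
  intro x _
  simp [Nat.mul_add]

lemma phi_single (p : PPVar s n) : phi (Finsupp.single p 1) = (p.2 : ℕ) := by
  unfold phi
  have : ∀ x : PPVar s n, (x.2 : ℕ) * (Finsupp.single p 1) x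
      = if p = x then (x.2 : ℕ) else 0 := by
    intro x
    rw [Finsupp.single_apply]
    by_cases h : p = x <;> simp [h]
  rw [Finset.sum_congr rfl (fun x _ => this x), Finset.sum_ite_eq]
  simp

lemma Bdeg_single (i : Fin s) (j : Fin (n i + 1)) (i' : Fin s) :
    Bdeg (Finsupp.single (⟨i, j⟩ : PPVar s n) 1) i' = if i' = i then 1 else 0 := by
  unfold Bdeg
  by_cases h : i' = i
  · subst h
    rw [if_pos rfl]
    have : ∀ j' : Fin (n i' + 1), (Finsupp.single (⟨i', j⟩ : PPVar s n) 1) ⟨i', j'⟩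
        = if j = j' then 1 else 0 := by
      intro j'
      rw [Finsupp.single_apply]
      by_cases h : j = j' <;> simp [h, Sigma.mk.inj_iff]
    rw [Finset.sum_congr rfl (fun x _ => this x), Finset.sum_ite_eq]
    simp
  · rw [if_neg h]
    apply Finset.sum_eq_zero
    intro j' _
    rw [Finsupp.single_apply, if_neg]
    intro he
    exact h (congrArg Sigma.fst he).symm

lemma trunc_unique (w u vv : PPVar s n →₀ ℕ) (a : Fin s → ℕ) (hw : w = u + vv) (i : Fin s)
    (hB : Bdeg u i = a i)
    (h3 : ∀ j j' : Fin (n i + 1), vv ⟨i, j⟩ ≠ 0 → u ⟨i, j'⟩ ≠ 0 → j' ≤ j) :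
    ∀ j : Fin (n i + 1), u ⟨i, j⟩ = trunc w a ⟨i, j⟩ := by
  have hle : ∀ x : PPVar s n, u x ≤ w x := by intro x; rw [hw]; simp
  suffices H : ∀ m : ℕ, ∀ h : m < n i + 1, u ⟨i, ⟨m, h⟩⟩ = trunc w a ⟨i, ⟨m, h⟩⟩ by
    intro j
    have := H (j : ℕ) j.isLt
    simpa using this
  intro m
  induction m using Nat.strong_induction_on with
  | _ m IH =>
  intro h
  have hpre : ∀ j'' : Fin (n i + 1), (j'' : ℕ) < m → u ⟨i, j''⟩ = trunc w a ⟨i, j''⟩ := by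
    intro j'' hj''
    have := IH (j'' : ℕ) hj'' j''.isLt
    simpa using this
  have hup : psum u i m = min (a i) (psum w i m) := by
    rw [psum_congr (fun j hj => hpre j hj), psum_trunc]
  by_cases hcase : ∃ j0 : Fin (n i + 1), m < (j0 : ℕ) ∧ u ⟨i, j0⟩ ≠ 0
  · obtain ⟨j0, hj0m, hj0ne⟩ := hcase
    have hv0 : ∀ j'' : Fin (n i + 1), (j'' : ℕ) ≤ m → vv ⟨i, j''⟩ = 0 := by
      intro j'' hj''
      by_contra hne
      have h5 := h3 j'' j0 hne hj0ne
      rw [Fin.le_def] at h5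
      omega
    have huw : ∀ j'' : Fin (n i + 1), (j'' : ℕ) ≤ m → u ⟨i, j''⟩ = w ⟨i, j''⟩ := by
      intro j'' hj''
      have he : w ⟨i, j''⟩ = u ⟨i, j''⟩ + vv ⟨i, j''⟩ := by rw [hw]; simp
      rw [he, hv0 j'' hj'', add_zero]
    have hpw : psum u i m = psum w i m :=
      psum_congr (fun j'' hj'' => huw j'' (le_of_lt hj''))
    have h1 : psum u i (j0 : ℕ) + u ⟨i, j0⟩ ≤ a i := by
      rw [← hB]; exact psum_succ_le_B u i j0
    have h2 : psum u i (m + 1) ≤ psum u i (j0 : ℕ) := psum_mono u i (by omega)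
    have h4 : psum u i (m + 1) = psum u i m + u ⟨i, ⟨m, h⟩⟩ := by
      rw [psum_succ, dif_pos h]
    have h5 : u ⟨i, ⟨m, h⟩⟩ = w ⟨i, ⟨m, h⟩⟩ := huw ⟨m, h⟩ (le_of_eq rfl)
    rw [trunc_apply']
    simp only [Fin.val_mk]
    rw [min_eq_left (by omega)]
    exact h5
  · push_neg at hcase
    have hBu : psum u i (n i + 1) = psum u i (m + 1) := by
      unfold psum
      apply Finset.sum_congr rfl
      intro j' _
      by_cases hj' : (j' : ℕ) < m + 1
      · rw [if_pos (by omega), if_pos hj']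
      · rw [if_pos (by omega), if_neg hj', hcase j' (by omega)]
    have h4 : psum u i (m + 1) = psum u i m + u ⟨i, ⟨m, h⟩⟩ := by
      rw [psum_succ, dif_pos h]
    have h6 : a i = psum u i m + u ⟨i, ⟨m, h⟩⟩ := by
      rw [← h4, ← hBu, ← Bdeg_eq_psum, hB]
    have hww : u ⟨i, ⟨m, h⟩⟩ ≤ w ⟨i, ⟨m, h⟩⟩ := hle _
    rw [trunc_apply']
    simp only [Fin.val_mk]
    rcases le_or_gt (a i) (psum w i m) with hc | hc
    · have h7 : psum u i m = a i := by rw [hup, min_eq_left hc]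
      have h8 : a i - psum w i m = 0 := by omega
      rw [h8]
      simp
      omega
    · have h7 : psum u i m = psum w i m := by rw [hup, min_eq_right (by omega)]
      rw [min_eq_right (by omega)]
      omega

lemma reach {k : Type*} [Field k] (I : Ideal (MvPolynomial (PPVar s n) k))
    (hI : ∀ u : PPVar s n →₀ ℕ, (monomial u (1 : k)) ∈ I →
      ∀ (i : Fin s) (j j' : Fin (n i + 1)), j' < j → u ⟨i, j⟩ ≠ 0 →
        (monomial (u - Finsupp.single ⟨i, j⟩ 1 + Finsupp.single ⟨i, j'⟩ 1) (1 : k)) ∈ I)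
    (w : PPVar s n →₀ ℕ) (a : Fin s → ℕ) (ha : ∀ i, a i ≤ Bdeg w i) :
    ∀ N u, phi u < N → (monomial u (1 : k)) ∈ I → (∀ x, u x ≤ w x) →
      (∀ i, Bdeg u i = a i) → (monomial (trunc w a) (1 : k)) ∈ I := by
  intro N
  induction N with
  | zero => intro u h; exact absurd h (Nat.not_lt_zero _)
  | succ N IH =>
    intro u hphi huI hle hB
    by_cases heq : u = trunc w a
    · rwa [← heq]
    · have hex : ∃ x : PPVar s n, u x ≠ trunc w a x := by
        by_contra hc; push_neg at hc; exact heq (Finsupp.ext hc)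
      obtain ⟨⟨i, jx⟩, hx⟩ := hex
      set Sne := Finset.univ.filter
        (fun j : Fin (n i + 1) => u ⟨i, j⟩ ≠ trunc w a ⟨i, j⟩) with hSnedef
      have hSne : Sne.Nonempty := ⟨jx, by simp [hSnedef, hx]⟩
      set js := Sne.min' hSne with hjsdef
      have hjs_mem : js ∈ Sne := Finset.min'_mem _ _
      have hjs_ne : u ⟨i, js⟩ ≠ trunc w a ⟨i, js⟩ := by
        have := hjs_mem
        rw [hSnedef, Finset.mem_filter] at this
        exact this.2
      have hjs_min : ∀ j : Fin (n i + 1), u ⟨i, j⟩ ≠ trunc w a ⟨i, j⟩ → js ≤ j :=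
        fun j hj => Finset.min'_le _ _ (by rw [hSnedef, Finset.mem_filter]; exact ⟨Finset.mem_univ _, hj⟩)
      have hpre : ∀ j : Fin (n i + 1), (j : ℕ) < (js : ℕ) → u ⟨i, j⟩ = trunc w a ⟨i, j⟩ := by
        intro j hj
        by_contra hc
        have := hjs_min j hc
        rw [Fin.le_def] at this
        omega
      have hup : psum u i (js : ℕ) = min (a i) (psum w i (js : ℕ)) := by
        rw [psum_congr (fun j hj => hpre j hj), psum_trunc]
      have h1 : psum u i (js : ℕ) + u ⟨i, js⟩ ≤ a i := by
        rw [← hB i]; exact psum_succ_le_B u i js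
      have hle_tr : u ⟨i, js⟩ ≤ trunc w a ⟨i, js⟩ := by
        rw [trunc_apply']
        refine le_min (hle _) ?_
        rcases le_or_gt (a i) (psum w i (js : ℕ)) with hc | hc
        · have h2 : psum u i (js : ℕ) = a i := by rw [hup, min_eq_left hc]
          omega
        · have h2 : psum u i (js : ℕ) = psum w i (js : ℕ) := by
            rw [hup, min_eq_right (by omega)]
          omega
      have hstar : u ⟨i, js⟩ < trunc w a ⟨i, js⟩ := lt_of_le_of_ne hle_tr hjs_ne
      have hj0 : ∃ j0 : Fin (n i + 1), trunc w a ⟨i, j0⟩ < u ⟨i, j0⟩ := by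
        by_contra hc
        push_neg at hc
        have hsum : Bdeg u i < Bdeg (trunc w a) i :=
          Finset.sum_lt_sum (fun j _ => hc j) ⟨js, Finset.mem_univ _, hstar⟩
        rw [hB i, Bdeg_trunc w a i (ha i)] at hsum
        omega
      obtain ⟨j0, hj0lt⟩ := hj0
      have hj0ne : u ⟨i, j0⟩ ≠ 0 := by omega
      have hjsj0 : js < j0 := by
        have hne0 : u ⟨i, j0⟩ ≠ trunc w a ⟨i, j0⟩ := by omega
        rcases lt_or_eq_of_le (hjs_min j0 hne0) with h6 | h6
        · exact h6
        · exfalso; rw [h6] at hstar; omega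
      have hsplit : (u - Finsupp.single (⟨i, j0⟩ : PPVar s n) 1) + Finsupp.single ⟨i, j0⟩ 1 = u :=
        tsub_add_cancel_of_le (Finsupp.single_le_iff.mpr (by omega))
      have hne' : (⟨i, j0⟩ : PPVar s n) ≠ ⟨i, js⟩ := by
        simp only [ne_eq, Sigma.mk.inj_iff, heq_eq_eq, true_and]
        intro hcon
        rw [hcon] at hjsj0
        exact lt_irrefl _ hjsj0
      have hI2 := hI u huI i j0 js hjsj0 hj0ne
      have hphi2 : phi (u - Finsupp.single (⟨i, j0⟩ : PPVar s n) 1 + Finsupp.single ⟨i, js⟩ 1)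
          < phi u := by
        have e1 : phi u = phi (u - Finsupp.single (⟨i, j0⟩ : PPVar s n) 1) + (j0 : ℕ) := by
          conv_lhs => rw [← hsplit]
          rw [phi_add, phi_single]
        have e2 : phi (u - Finsupp.single (⟨i, j0⟩ : PPVar s n) 1 + Finsupp.single ⟨i, js⟩ 1)
            = phi (u - Finsupp.single (⟨i, j0⟩ : PPVar s n) 1) + (js : ℕ) := by
          rw [phi_add, phi_single]
        rw [Fin.lt_def] at hjsj0
        omega
      have hB2 : ∀ i', Bdeg (u - Finsupp.single (⟨i, j0⟩ : PPVar s n) 1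
          + Finsupp.single ⟨i, js⟩ 1) i' = a i' := by
        intro i'
        have e1 : Bdeg u i' = Bdeg (u - Finsupp.single (⟨i, j0⟩ : PPVar s n) 1) i'
            + (if i' = i then 1 else 0) := by
          conv_lhs => rw [← hsplit]
          rw [Bdeg_add, Bdeg_single]
        rw [Bdeg_add, Bdeg_single, ← hB i', e1]
      have hle2 : ∀ x, ((u - Finsupp.single (⟨i, j0⟩ : PPVar s n) 1
          + Finsupp.single (⟨i, js⟩ : PPVar s n) 1 : PPVar s n →₀ ℕ)) x ≤ w x := by
        intro x
        rw [Finsupp.add_apply, Finsupp.tsub_apply]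
        by_cases hxs : x = (⟨i, js⟩ : PPVar s n)
        · subst hxs
          rw [Finsupp.single_apply, Finsupp.single_apply, if_neg hne', if_pos rfl]
          have h7 : trunc w a ⟨i, js⟩ ≤ w ⟨i, js⟩ := trunc_le _ _ _
          omega
        · rw [Finsupp.single_apply (a := (⟨i, js⟩ : PPVar s n)), if_neg (fun hcon => hxs hcon.symm)]
          have := hle x
          omega
      exact IH _ (by omega) hI2 hle2 hB2

lemma weight_wdeg {σ : Type*} {M : Type*} [AddCommMonoid M] (w' : σ → M) (u : σ →₀ ℕ) :
    Finsupp.weight w' u = wdeg w' u := Finsupp.weight_apply w' u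

lemma wdeg_apply (u : PPVar s n →₀ ℕ) (i : Fin s) : wdeg (ppw s n) u i = Bdeg u i := by
  unfold wdeg Finsupp.sum
  rw [Finset.sum_apply]
  have hext : (∑ x ∈ u.support, (u x • ppw s n x) i) = ∑ x : PPVar s n, (u x • ppw s n x) i :=
    Finset.sum_subset (Finset.subset_univ _)
      (by intro x _ hx; rw [Finsupp.notMem_support_iff.mp hx]; simp)
  rw [hext]
  have key : ∀ i' : Fin s, (∑ j : Fin (n i' + 1),
      (u ⟨i', j⟩ • ppw s n ⟨i', j⟩) i) = if i = i' then Bdeg u i' else 0 := by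
    intro i'
    by_cases h : i = i'
    · subst h
      rw [if_pos rfl]
      unfold Bdeg
      apply Finset.sum_congr rfl
      intro j _
      simp [ppw, Pi.single_apply]
    · rw [if_neg h]
      apply Finset.sum_eq_zero
      intro j _
      simp [ppw, Pi.single_apply, h]
  calc (∑ x : PPVar s n, (u x • ppw s n x) i)
      = ∑ i' : Fin s, ∑ j : Fin (n i' + 1), (u ⟨i', j⟩ • ppw s n ⟨i', j⟩) i := by
        rw [← Finset.univ_sigma_univ, Finset.sum_sigma]
    _ = ∑ i' : Fin s, if i = i' then Bdeg u i' else 0 :=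
        Finset.sum_congr rfl (fun i' _ => key i')
    _ = Bdeg u i := by rw [Finset.sum_ite_eq]; simp

lemma mem_span_support {k : Type*} [Field k] {σ : Type*} (G : Set (MvPolynomial σ k))
    {f : MvPolynomial σ k} (hf : f ∈ Ideal.span G) {m : σ →₀ ℕ} (hm : m ∈ f.support) :
    ∃ g ∈ G, ∃ m' ∈ g.support, ∃ t, m = m' + t := by
  classical
  have H : ∀ m ∈ f.support, ∃ g ∈ G, ∃ m' ∈ g.support, ∃ t, m = m' + t := by
    refine Submodule.span_induction (p := fun f _ => ∀ m ∈ f.support,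
      ∃ g ∈ G, ∃ m' ∈ g.support, ∃ t, m = m' + t) ?_ ?_ ?_ ?_ hf
    · intro x hx m hm
      exact ⟨x, hx, m, hm, 0, (add_zero m).symm⟩
    · intro m hm
      simp at hm
    · intro x y hx hy ihx ihy m hm
      rcases Finset.mem_union.mp (MvPolynomial.support_add hm) with h | h
      · exact ihx m h
      · exact ihy m h
    · intro c x hx ih m hm
      rw [smul_eq_mul] at hm
      obtain ⟨y, hy, z, hz, hyz⟩ := Finset.mem_add.mp (MvPolynomial.support_mul c x hm)
      obtain ⟨g, hgG, m', hm', t, ht⟩ := ih z hz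
      exact ⟨g, hgG, m', hm', t + y, by rw [← hyz, ht]; abel⟩
  exact H m hm

end Aux

/-- **Partial Stanley decomposition of a strongly multistable ideal.** If `I` is strongly
multistable and generated in degrees `≤ a`, and `v ≥ a` componentwise, then the monomials in
`⋃_{x^u ∈ I_a} H(x^u)` form a `k`-basis of the graded piece `I_v` (they span it, and distinct
monomials are linearly independent), and the sets `H(x^u)` are pairwise disjoint. -/

theorem partial_stanley_decomposition {k : Type*} [Field k] {s : ℕ} {n : Fin s → ℕ}
    (I : Ideal (MvPolynomial (PPVar s n) k)) (a : Fin s → ℕ)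
    (hstab : StronglyMultistable I) (hgen : GenInDegLE (ppw s n) I a)
    (v : Fin s → ℕ) (hv : ∀ i, a i ≤ v i) :
    (Submodule.span k ((fun u => (monomial u (1 : k))) ''
        ⋃ u ∈ monomialsOf I a, Hset u (fun i => v i - a i)) =
      Submodule.restrictScalars k I ⊓ weightedHomogeneousSubmodule k (ppw s n) v) ∧
    ∀ u ∈ monomialsOf I a, ∀ u' ∈ monomialsOf I a, u ≠ u' →
      Disjoint (Hset u (fun i => v i - a i)) (Hset u' (fun i => v i - a i)) := by
  classical
  obtain ⟨hmon, hstab2⟩ := hstab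
  obtain ⟨A, hA⟩ := hmon
  obtain ⟨G, hG, hGdeg⟩ := hgen
  have hBof : ∀ (u : PPVar s n →₀ ℕ) (b : Fin s → ℕ), wdeg (ppw s n) u = b →
      ∀ i, Bdeg u i = b i := by
    intro u b h i
    rw [← wdeg_apply, h]
  have hup : ∀ (m t : PPVar s n →₀ ℕ), monomial m (1 : k) ∈ I →
      monomial (m + t) (1 : k) ∈ I := by
    intro m t hm
    have he : monomial (m + t) (1 : k) = monomial t (1 : k) * monomial m (1 : k) := by
      rw [monomial_mul, one_mul, add_comm]
    rw [he]
    exact Ideal.mul_mem_left _ _ hm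
  have hmono_mem : ∀ f ∈ I, ∀ m ∈ f.support, monomial m (1 : k) ∈ I := by
    intro f hf m hm
    rw [hA] at hf
    obtain ⟨g, hgA, m', hm', t, hmt⟩ := mem_span_support _ hf hm
    obtain ⟨u0, hu0A, rfl⟩ := hgA
    rw [support_monomial, if_neg one_ne_zero, Finset.mem_singleton] at hm'
    subst hm'
    have hu0I : monomial m' (1 : k) ∈ I := by
      rw [hA]; exact Ideal.subset_span ⟨m', hu0A, rfl⟩
    rw [hmt]
    exact hup _ _ hu0I
  have hkey : ∀ m : PPVar s n →₀ ℕ, monomial m (1 : k) ∈ I → (∀ i, Bdeg m i = v i) →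
      monomial (trunc m a) (1 : k) ∈ I ∧ (∀ i, Bdeg (trunc m a) i = a i) ∧
      m ∈ Hset (trunc m a) (fun i => v i - a i) := by
    intro m hmI hmB
    have haB : ∀ i, a i ≤ Bdeg m i := by intro i; rw [hmB i]; exact hv i
    have hmG : (monomial m (1 : k)) ∈ Ideal.span G := by rw [← hG]; exact hmI
    have hsupp : m ∈ (monomial m (1 : k)).support := by
      rw [support_monomial, if_neg one_ne_zero]; exact Finset.mem_singleton_self m
    obtain ⟨g, hgG, m', hm', t, hmt⟩ := mem_span_support G hmG hsupp
    obtain ⟨d, hgd, hda⟩ := hGdeg g hgG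
    have hm'I : monomial m' (1 : k) ∈ I :=
      hmono_mem g (by rw [hG]; exact Ideal.subset_span hgG) m' hm'
    have hm'B : ∀ i, Bdeg m' i = d i := by
      have hw : wdeg (ppw s n) m' = d := by
        rw [← weight_wdeg]
        exact hgd (mem_support_iff.mp hm')
      exact hBof m' d hw
    have htB : ∀ i, Bdeg m i = d i + Bdeg t i := by
      intro i; rw [hmt, Bdeg_add, hm'B]
    have hcB : ∀ i, (fun i => a i - d i) i ≤ Bdeg t i := by
      intro i
      have h1 := haB i
      have h2 := htB i
      have h3 := hda i
      show a i - d i ≤ Bdeg t i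
      omega
    have hu0I : monomial (m' + trunc t (fun i => a i - d i)) (1 : k) ∈ I := hup _ _ hm'I
    have hu0B : ∀ i, Bdeg (m' + trunc t (fun i => a i - d i)) i = a i := by
      intro i
      rw [Bdeg_add, hm'B, Bdeg_trunc t _ i (hcB i)]
      have := hda i
      show d i + (a i - d i) = a i
      omega
    have hu0le : ∀ x, (m' + trunc t (fun i => a i - d i)) x ≤ m x := by
      intro x
      rw [hmt, Finsupp.add_apply, Finsupp.add_apply]
      exact Nat.add_le_add (le_refl _) (trunc_le t _ x)
    have htrI : monomial (trunc m a) (1 : k) ∈ I :=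
      reach I hstab2 m a haB (phi (m' + trunc t (fun i => a i - d i)) + 1) _
        (by omega) hu0I hu0le hu0B
    have hletr : trunc m a ≤ m := Finsupp.le_def.mpr (fun x => trunc_le m a x)
    have hsplitm : (m - trunc m a) + trunc m a = m := tsub_add_cancel_of_le hletr
    refine ⟨htrI, fun i => Bdeg_trunc m a i (haB i), ?_⟩
    refine ⟨m - trunc m a, ?_, ?_, ?_⟩
    · rw [add_comm, hsplitm]
    · funext i
      rw [wdeg_apply]
      have h1 : Bdeg (m - trunc m a) i + Bdeg (trunc m a) i = Bdeg m i := by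
        rw [← Bdeg_add, hsplitm]
      have h2 := Bdeg_trunc m a i (haB i)
      have h3 := hmB i
      omega
    · intro i j j' hvne hune
      exact trunc_cond m a i j j' hvne hune
  constructor
  · apply le_antisymm
    · rw [Submodule.span_le]
      rintro f ⟨wv, hwv, rfl⟩
      obtain ⟨u, hu, hH⟩ := Set.mem_iUnion₂.mp hwv
      obtain ⟨vv, rfl, hvdeg, hcond⟩ := hH
      refine Submodule.mem_inf.mpr ⟨?_, ?_⟩
      · rw [Submodule.restrictScalars_mem]
        exact hup u vv hu.2
      · rw [mem_weightedHomogeneousSubmodule]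
        apply isWeightedHomogeneous_monomial
        rw [weight_wdeg]
        funext i
        rw [wdeg_apply, Bdeg_add]
        have h1 := hBof u a hu.1 i
        have h2 : Bdeg vv i = v i - a i := hBof vv _ hvdeg i
        have := hv i
        omega
    · intro f hf
      obtain ⟨hfI, hfhom⟩ := Submodule.mem_inf.mp hf
      rw [Submodule.restrictScalars_mem] at hfI
      rw [mem_weightedHomogeneousSubmodule] at hfhom
      rw [f.as_sum]
      apply Submodule.sum_mem
      intro m hm
      have hcoeff : coeff m f ≠ 0 := mem_support_iff.mp hm
      have hmdeg : ∀ i, Bdeg m i = v i := by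
        apply hBof
        rw [← weight_wdeg]
        exact hfhom hcoeff
      have hmI : monomial m (1 : k) ∈ I := hmono_mem f hfI m hm
      obtain ⟨htrI, htrB, hHm⟩ := hkey m hmI hmdeg
      have he : monomial m (coeff m f) = (coeff m f) • monomial m (1 : k) := by
        rw [smul_monomial, smul_eq_mul, mul_one]
      rw [he]
      apply Submodule.smul_mem
      apply Submodule.subset_span
      refine ⟨m, ?_, rfl⟩
      apply Set.mem_iUnion₂.mpr
      refine ⟨trunc m a, ⟨?_, htrI⟩, hHm⟩
      funext i
      rw [wdeg_apply]
      exact htrB i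
  · intro u hu u' hu' hne
    rw [Set.disjoint_left]
    intro wv hw hw'
    obtain ⟨vv, rfl, hvdeg, hcond⟩ := hw
    obtain ⟨vv', he', hvdeg', hcond'⟩ := hw'
    apply hne
    apply Finsupp.ext
    rintro ⟨i, j⟩
    have e1 := trunc_unique (u + vv) u vv a rfl i (hBof u a hu.1 i)
      (fun j j' => hcond i j j') j
    have e2 := trunc_unique (u + vv) u' vv' a he' i (hBof u' a hu'.1 i)
      (fun j j' => hcond' i j j') j
    rw [e1, e2]

end Gotzmann
end

section
/- Let S be the Cox ring of P^{n_1} × ... × P^{n_s} and let M be a strongly multistable set of monomials of degree (a_1,...,a_s) that is x_1,...,x_{i−1}-lex for some 2 ≤ i ≤ s. Then M^{x_i lex} is x_1,...,x_i-lex. -/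
open MvPolynomial

namespace Gotzmann

/-! In each fibre over a fixed off-block-`i` part, `M^{x_i lex}` is an initial lexsegment, and
lexsegments are closed under passing to lexicographically larger monomials: this gives the
`x_i`-lex property. For `j ≠ i`, raising the block-`j` part of some `u ∈ M` to a lex-larger
monomial maps the block-`i` fibre of `u` into the fibre of the new point, because `M` is
`x_j`-lex; the new fibre is at least as large, hence so is its lexsegment. -/

section XiLex

variable {s : ℕ} {n : Fin s → ℕ}

lemma offBlock_add (i : Fin s) (u v : PPVar s n →₀ ℕ) :
    offBlock i (u + v) = offBlock i u + offBlock i v := Finsupp.filter_add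

lemma blockPart_add (i : Fin s) (u v : PPVar s n →₀ ℕ) :
    blockPart i (u + v) = blockPart i u + blockPart i v := Finsupp.filter_add

lemma blockPart_eq_self {i : Fin s} {p : PPVar s n →₀ ℕ}
    (h : ∀ v ∈ p.support, v.1 = i) : blockPart i p = p :=
  (Finsupp.filter_eq_self_iff _ _).mpr fun v hv => h v (Finsupp.mem_support_iff.mpr hv)

lemma blockPart_eq_zero {i j : Fin s} (hji : j ≠ i) {p : PPVar s n →₀ ℕ}
    (h : ∀ v ∈ p.support, v.1 = j) : blockPart i p = 0 :=
  (Finsupp.filter_eq_zero_iff _ _).mpr fun v hv => by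
    by_contra hpv
    exact hji ((h v (Finsupp.mem_support_iff.mpr hpv)).symm.trans hv)

lemma offBlock_eq_self {i j : Fin s} (hji : j ≠ i) {p : PPVar s n →₀ ℕ}
    (h : ∀ v ∈ p.support, v.1 = j) : offBlock i p = p :=
  (Finsupp.filter_eq_self_iff _ _).mpr fun v hv =>
    (h v (Finsupp.mem_support_iff.mpr hv)) ▸ hji

lemma offBlock_eq_zero {i : Fin s} {p : PPVar s n →₀ ℕ}
    (h : ∀ v ∈ p.support, v.1 = i) : offBlock i p = 0 :=
  (Finsupp.filter_eq_zero_iff _ _).mpr fun v hv => by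
    by_contra hpv
    exact hv (h v (Finsupp.mem_support_iff.mpr hpv))

lemma offBlock_comm (i j : Fin s) (u : PPVar s n →₀ ℕ) :
    offBlock i (offBlock j u) = offBlock j (offBlock i u) := by
  ext v
  simp only [offBlock, Finsupp.filter_apply]
  split_ifs <;> rfl

lemma offBlock_idem (i : Fin s) (u : PPVar s n →₀ ℕ) :
    offBlock i (offBlock i u) = offBlock i u := by
  ext v
  simp only [offBlock, Finsupp.filter_apply]
  split_ifs <;> rfl

lemma blockPart_offBlock_self (i : Fin s) (u : PPVar s n →₀ ℕ) :
    blockPart i (offBlock i u) = 0 := by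
  ext v
  simp only [blockPart, offBlock, Finsupp.filter_apply, Finsupp.coe_zero, Pi.zero_apply]
  split_ifs <;> simp_all

lemma blockPart_offBlock {i j : Fin s} (hji : j ≠ i) (u : PPVar s n →₀ ℕ) :
    blockPart j (offBlock i u) = blockPart j u := by
  ext v
  simp only [blockPart, offBlock, Finsupp.filter_apply]
  split_ifs <;> simp_all

lemma blockLt_trans {i : Fin s} {u v w : PPVar s n →₀ ℕ}
    (huv : blockLt i u v) (hvw : blockLt i v w) : blockLt i u w :=
  @lt_trans (Lex (Fin (n i + 1) → ℕ)) _
    (toLex fun j => u ⟨i, j⟩) (toLex fun j => v ⟨i, j⟩) (toLex fun j => w ⟨i, j⟩) huv hvw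

lemma blockMon_finite (i : Fin s) (d : ℕ) : (blockMon (n := n) i d).Finite := by
  refine (Set.finite_Iic (Finsupp.equivFunOnFinite.symm fun _ : PPVar s n => d)).subset ?_
  rintro p ⟨-, rfl⟩ v
  exact Finsupp.single_eval_le_sum p (g := id) rfl (fun _ => Nat.zero_le _) v

lemma blockPart_offBlock_add_of_ne {i j : Fin s} (hji : j ≠ i) (u : PPVar s n →₀ ℕ)
    {p : PPVar s n →₀ ℕ} (hp : ∀ v ∈ p.support, v.1 = j) :
    blockPart i (offBlock j u + p) = blockPart i u := by
  rw [blockPart_add, blockPart_offBlock hji.symm, blockPart_eq_zero hji hp, add_zero]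

lemma mem_lexSeg_of_blockLt {i : Fin s} {d c : ℕ} {p p' : PPVar s n →₀ ℕ}
    (hp : p ∈ lexSeg i d c) (hp' : p' ∈ blockMon i d) (hlt : blockLt i p p') :
    p' ∈ lexSeg i d c :=
  ⟨hp', lt_of_le_of_lt (Set.ncard_le_ncard
    (Set.inter_subset_inter_right _ fun _ hq => blockLt_trans hlt hq)
    ((blockMon_finite i d).inter_of_left _)) hp.2⟩

lemma lexSeg_mono {i : Fin s} {d c c' : ℕ} (h : c ≤ c') :
    lexSeg (n := n) i d c ⊆ lexSeg i d c' :=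
  fun _ hp => ⟨hp.1, hp.2.trans_le h⟩

/-- The paper's `M_j` for the fibre of `M` over `x^{u_j} = offBlock i u`. -/
def blockFibre (i : Fin s) (M : Set (PPVar s n →₀ ℕ)) (u : PPVar s n →₀ ℕ) :
    Set (PPVar s n →₀ ℕ) :=
  {p | p ∈ blockMon i ((blockPart i u).sum fun _ e => e) ∧ offBlock i u + p ∈ M}

lemma blockFibre_finite (i : Fin s) (M : Set (PPVar s n →₀ ℕ)) (u : PPVar s n →₀ ℕ) :
    (blockFibre i M u).Finite :=
  (blockMon_finite i _).subset fun _ hp => hp.1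

lemma mem_xiLexify {i : Fin s} {M : Set (PPVar s n →₀ ℕ)} {w : PPVar s n →₀ ℕ} :
    w ∈ xiLexify i M ↔ ∃ u ∈ M, offBlock i w = offBlock i u ∧
      blockPart i w ∈ lexSeg i ((blockPart i u).sum fun _ e => e) (blockFibre i M u).ncard :=
  Iff.rfl

theorem isXiLex_xiLexify_self (i : Fin s) (M : Set (PPVar s n →₀ ℕ)) :
    IsXiLex i (xiLexify i M) := by
  intro w hw p' hsupp hdeg hlt
  obtain ⟨u, huM, hoff, hseg⟩ := mem_xiLexify.mp hw
  have hblock : blockPart i (offBlock i w + p') = p' := by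
    rw [blockPart_add, blockPart_offBlock_self, blockPart_eq_self hsupp, zero_add]
  refine mem_xiLexify.mpr ⟨u, huM, ?_, ?_⟩
  · rw [offBlock_add, offBlock_idem, offBlock_eq_zero hsupp, add_zero, hoff]
  · rw [hblock]
    exact mem_lexSeg_of_blockLt hseg ⟨hsupp, hdeg.trans hseg.1.2⟩ hlt

theorem IsXiLex.blockFibre_subset {i j : Fin s} {M : Set (PPVar s n →₀ ℕ)}
    (hM : IsXiLex j M) (hji : j ≠ i) {u p' : PPVar s n →₀ ℕ}
    (hp' : p' ∈ blockMon j ((blockPart j u).sum fun _ e => e))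
    (hlt : blockLt j (blockPart j u) p') :
    blockFibre i M u ⊆ blockFibre i M (offBlock j u + p') := by
  rintro p ⟨hpmon, hpM⟩
  have hblock : blockPart j (offBlock i u + p) = blockPart j u :=
    blockPart_offBlock_add_of_ne hji.symm u hpmon.1
  have hswap : offBlock i (offBlock j u + p') + p = offBlock j (offBlock i u + p) + p' := by
    rw [offBlock_add, offBlock_add, offBlock_comm, offBlock_eq_self hji hp'.1,
      offBlock_eq_self hji.symm hpmon.1, add_right_comm]
  rw [blockFibre, Set.mem_ofPred_eq, blockPart_offBlock_add_of_ne hji u hp'.1, hswap]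
  exact ⟨hpmon, hM _ hpM p' hp'.1 (hblock ▸ hp'.2) (hblock ▸ hlt)⟩

theorem IsXiLex.xiLexify {i j : Fin s} {M : Set (PPVar s n →₀ ℕ)}
    (hM : IsXiLex j M) (hji : j ≠ i) : IsXiLex j (xiLexify i M) := by
  intro w hw p' hsupp hdeg hlt
  obtain ⟨u, huM, hoff, hseg⟩ := mem_xiLexify.mp hw
  have hblock : blockPart j w = blockPart j u := by
    rw [← blockPart_offBlock hji w, hoff, blockPart_offBlock hji u]
  rw [hblock] at hdeg hlt
  refine mem_xiLexify.mpr ⟨offBlock j u + p', hM u huM p' hsupp hdeg hlt, ?_, ?_⟩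
  · rw [offBlock_add, offBlock_add, offBlock_comm, hoff, offBlock_comm]
  · rw [blockPart_offBlock_add_of_ne hji w hsupp, blockPart_offBlock_add_of_ne hji u hsupp]
    exact lexSeg_mono (Set.ncard_le_ncard (hM.blockFibre_subset hji ⟨hsupp, hdeg⟩ hlt)
      (blockFibre_finite i M _)) hseg

end XiLex

theorem xiLexify_isLex_general {s : ℕ} {n : Fin s → ℕ}
    (M : Set (PPVar s n →₀ ℕ))
    (i : Fin s)
    (hlex : ∀ i' : Fin s, i' < i → IsXiLex i' M) :
    ∀ i' : Fin s, i' ≤ i → IsXiLex i' (xiLexify i M) := by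
  intro i' hi'
  rcases hi'.lt_or_eq with hlt | rfl
  · exact (hlex i' hlt).xiLexify hlt.ne
  · exact isXiLex_xiLexify_self i' M

/-- **Lemma: `M^{x_i lex}` is `x_1,…,x_i`-lex.** If `M` is a strongly multistable set of
monomials of multidegree `a` which is `x_1,…,x_{i−1}`-lex (indices `0`-based: `x_{i'}`-lex for
all `i' < i`, where `i ≥ 1`), then `M^{x_i lex}` is `x_{i'}`-lex for all `i' ≤ i`. -/
theorem xiLexify_isLex {s : ℕ} {n : Fin s → ℕ} (a : Fin s → ℕ)
    (M : Set (PPVar s n →₀ ℕ))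
    (hdeg : ∀ u ∈ M, wdeg (ppw s n) u = a)
    (hstab : StronglyMultistableSet M)
    (i : Fin s) (hi : 1 ≤ (i : ℕ))
    (hlex : ∀ i' : Fin s, i' < i → IsXiLex i' M) :
    ∀ i' : Fin s, i' ≤ i → IsXiLex i' (xiLexify i M) :=
  xiLexify_isLex_general M i hlex

end Gotzmann
end

section
/- Let R = k[z_1,...,z_{d+2}] be the Cox ring of the smooth Picard-rank-2 toric variety X_d(a) for a = (a_1,...,a_s) with 0 ≤ a_1 ≤ ... ≤ a_s, graded by deg(z_i) = (−a_i, 1) for 1 ≤ i ≤ s, deg(z_{s+1}) = (0,1), and deg(z_i) = (1,0) for s+2 ≤ i ≤ d+2. Then every monomial of R of degree (b_1, b_2) ∈ ℕ^2 is a product of b_1 monomials of degree (1,0) and b_2 monomials of degree (0,1). Consequently, with n = dim_k R_{(1,0)} − 1 and m = dim_k R_{(0,1)} − 1 and S = Cox(P^n × P^m), the k-algebra map ψ : S → ⊕_{b ∈ ℕ^2} R_b sending the degree-(1,0) variables of S bijectively to the monomial basis of R_{(1,0)} and the degree-(0,1) variables to the monomial basis of R_{(0,1)} is surjective. -/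
open MvPolynomial

namespace Gotzmann

/-! A monomial of degree `(b₀, b₁ + 1)` contains a fibre variable `zᵢ`, of degree
`(-cᵢ, 1)`. Since its first degree `b₀` is nonnegative, its base variables have total degree
at least `cᵢ`, so it is divisible by `zᵢ` times `cᵢ` base variables, a monomial of degree
`(0, 1)`. Peeling off such factors leaves a monomial of degree `(b₀, 0)`, which is a product of
`b₀` base variables. Hence every monomial of `⊕_{b ∈ ℕ²} R_b` is a product of images of
variables of `S`. -/

open Finsupp

lemma wdeg_eq_weight {σ M : Type*} [AddCommMonoid M] (w : σ → M) (u : σ →₀ ℕ) :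
    wdeg w u = weight w u := rfl

lemma exists_fin_sum_single {σ : Type*} {u : σ →₀ ℕ} {N : ℕ} (hu : degree u = N) :
    ∃ f : Fin N → σ, (∀ p, f p ∈ u.support) ∧ u = ∑ p, single (f p) 1 := by
  classical
  set l := (toMultiset u).toList
  have hl : l.length = N := by
    rw [← hu, Multiset.length_toList, card_toMultiset]; rfl
  subst hl
  refine ⟨fun p => l[p.1], fun p => ?_, ?_⟩
  · rw [← mem_toMultiset, ← Multiset.mem_toList]
    exact List.getElem_mem _
  · rw [Fin.sum_univ_fun_getElem l (single · 1), Multiset.sum_map_toList]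
    conv_lhs => rw [← Multiset.toFinsupp.apply_symm_apply u, Multiset.toFinsupp_symm_apply,
      ← Multiset.sum_map_singleton (toMultiset u), map_multiset_sum, Multiset.map_map]
    simp

section ProjectivizedBundle

variable {σ : Type*} (B : σ → Prop) [DecidablePred B] (c : σ → ℕ)

/-- The Cox-ring grading of a projectivised split vector bundle over a projective space;
`B` selects the base variables. -/
def bundleWeight : σ → Fin 2 → ℤ := fun i => if B i then ![1, 0] else ![-(c i : ℤ), 1]

variable {B c}

lemma weight_bundleWeight_of_base {v : σ →₀ ℕ} (hv : ∀ i ∈ v.support, B i) :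
    weight (bundleWeight B c) v = ![(v.degree : ℤ), 0] := by
  have hterm : ∀ i ∈ v.support, v i • bundleWeight B c i = v i • ![(1 : ℤ), 0] :=
    fun i hi => by rw [bundleWeight, if_pos (hv i hi)]
  rw [weight_apply, Finsupp.sum, Finset.sum_congr rfl hterm, ← Finset.sum_smul, degree_apply]
  ext j
  fin_cases j <;> simp

lemma weight_bundleWeight_of_fibre {v : σ →₀ ℕ} (hv : ∀ i ∈ v.support, ¬ B i) :
    weight (bundleWeight B c) v = ![-((weight c v : ℕ) : ℤ), (v.degree : ℤ)] := by
  have hterm : ∀ i ∈ v.support, v i • bundleWeight B c i = v i • ![-(c i : ℤ), 1] :=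
    fun i hi => by rw [bundleWeight, if_neg (hv i hi)]
  rw [weight_apply, weight_apply, Finsupp.sum, Finsupp.sum, Finset.sum_congr rfl hterm,
    degree_apply]
  ext j
  fin_cases j <;> simp [Finset.sum_apply]

lemma weight_bundleWeight (u : σ →₀ ℕ) :
    weight (bundleWeight B c) u = ![((u.filter B).degree : ℤ) - weight c (u.filter (¬ B ·)),
      ((u.filter (¬ B ·)).degree : ℤ)] := by
  conv_lhs => rw [← filter_add_filter_not u B]
  rw [map_add, weight_bundleWeight_of_base (by simp [support_filter]),
    weight_bundleWeight_of_fibre (by simp [support_filter])]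
  ext j
  fin_cases j <;> simp [sub_eq_add_neg]

lemma exists_le_weight_bundleWeight_eq_zero_one {u : σ →₀ ℕ} {b₀ b₁ : ℕ}
    (hu : weight (bundleWeight B c) u = ![(b₀ : ℤ), (b₁ + 1 : ℕ)]) :
    ∃ g ≤ u, weight (bundleWeight B c) g = ![0, 1] := by
  rw [weight_bundleWeight] at hu
  have hbase := congrFun hu 0
  have hfibre := congrFun hu 1
  simp only [Matrix.cons_val_zero, Matrix.cons_val_one] at hbase hfibre
  obtain ⟨i, hi⟩ : (u.filter (¬ B ·)).support.Nonempty :=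
    support_nonempty_iff.2 fun h => by simp [h] at hfibre; omega
  have hBi : ¬ B i := by simp_all [support_filter]
  -- `b₀ ≥ 0`: the base part outweighs the twists `c` of the fibre part
  have hci : c i ≤ (u.filter B).degree := by
    have := le_weight_of_ne_zero' c (Finsupp.mem_support_iff.1 hi)
    omega
  obtain ⟨v, hvle, hvdeg⟩ := exists_le_degree_eq _ _ hci
  have hvB : ∀ j ∈ v.support, B j := fun j hj => by
    have := support_mono hvle hj
    simp_all [support_filter]
  refine ⟨single i 1 + v, ?_, ?_⟩
  · have hui : 1 ≤ u.filter (¬ B ·) i :=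
      Nat.one_le_iff_ne_zero.2 (Finsupp.mem_support_iff.1 hi)
    calc single i 1 + v ≤ u.filter (¬ B ·) + u.filter B := add_le_add (single_le_iff.2 hui) hvle
      _ = u := by rw [add_comm, filter_add_filter_not]
  · rw [map_add, weight_single, one_smul, weight_bundleWeight_of_base hvB, hvdeg, bundleWeight,
      if_neg hBi]
    ext j
    fin_cases j <;> simp

theorem exists_fin_sum_of_weight_bundleWeight_eq (b₀ b₁ : ℕ) (u : σ →₀ ℕ)
    (hu : weight (bundleWeight B c) u = ![(b₀ : ℤ), b₁]) :
    ∃ (f : Fin b₀ → σ →₀ ℕ) (g : Fin b₁ → σ →₀ ℕ),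
      (∀ p, weight (bundleWeight B c) (f p) = ![1, 0]) ∧
      (∀ q, weight (bundleWeight B c) (g q) = ![0, 1]) ∧
      u = ∑ p, f p + ∑ q, g q := by
  induction b₁ generalizing u with
  | zero =>
    have hfibre : (u.filter (¬ B ·)).degree = 0 := by
      simpa using congrFun ((weight_bundleWeight u).symm.trans hu) 1
    have hB : ∀ i ∈ u.support, B i := fun i hi => by
      by_contra h
      exact Finsupp.mem_support_iff.1 hi
        ((filter_eq_zero_iff _ _).1 ((degree_eq_zero_iff _).1 hfibre) i h)
    rw [weight_bundleWeight_of_base hB] at hu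
    obtain ⟨f, hfu, rfl⟩ := exists_fin_sum_single (by simpa using congrFun hu 0)
    refine ⟨fun p => single (f p) 1, Fin.elim0, fun p => ?_, nofun, by simp⟩
    rw [weight_single, one_smul, bundleWeight, if_pos (hB _ (hfu p))]
  | succ b₁ ih =>
    obtain ⟨g₀, hle, hg₀⟩ := exists_le_weight_bundleWeight_eq_zero_one hu
    have hsplit : u - g₀ + g₀ = u := tsub_add_cancel_of_le hle
    have hrest : weight (bundleWeight B c) (u - g₀) = ![(b₀ : ℤ), b₁] := by
      have := congrArg (weight (bundleWeight B c)) hsplit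
      rw [map_add, hu, hg₀] at this
      rw [eq_sub_of_add_eq this]
      ext j
      fin_cases j <;> simp
    obtain ⟨f, g, hf, hg, hfg⟩ := ih (u - g₀) hrest
    refine ⟨f, Fin.cons g₀ g, hf, Fin.cases hg₀ hg, ?_⟩
    rw [Fin.sum_univ_succ, Fin.cons_zero]
    simp only [Fin.cons_succ]
    rw [← hsplit, hfg]
    abel

end ProjectivizedBundle

lemma kw_eq_bundleWeight (d s : ℕ) (a : Fin s → ℕ) :
    kw d s a = bundleWeight (fun i : Fin (d + 2) => s < (i : ℕ))
      (fun i => if h : (i : ℕ) < s then a ⟨i, h⟩ else 0) := by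
  ext i : 1
  unfold kw bundleWeight
  split_ifs <;> simp_all <;> omega

lemma exists_fin_sum_of_wdeg_kw_eq {d s : ℕ} {a : Fin s → ℕ} (b : Fin 2 → ℕ)
    (u : Fin (d + 2) →₀ ℕ) (hu : wdeg (kw d s a) u = fun j => (b j : ℤ)) :
    ∃ (f : Fin (b 0) → (Fin (d + 2) →₀ ℕ)) (g : Fin (b 1) → (Fin (d + 2) →₀ ℕ)),
      (∀ p, wdeg (kw d s a) (f p) = ![(1 : ℤ), 0]) ∧
      (∀ q, wdeg (kw d s a) (g q) = ![(0 : ℤ), 1]) ∧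
      u = (∑ p, f p) + ∑ q, g q := by
  simp only [wdeg_eq_weight, kw_eq_bundleWeight] at hu ⊢
  exact exists_fin_sum_of_weight_bundleWeight_eq _ _ u (by rw [hu]; ext j; fin_cases j <;> rfl)

section MonomialSubalgebra

variable {R σ : Type*} [CommSemiring R] {A : Subalgebra R (MvPolynomial σ R)}

lemma monomial_one_mem_of_mem_closure {T : Set (σ →₀ ℕ)}
    (hT : ∀ t ∈ T, monomial t (1 : R) ∈ A) {u : σ →₀ ℕ} (hu : u ∈ AddSubmonoid.closure T) : monomial u (1 : R) ∈ A := by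
  induction hu using AddSubmonoid.closure_induction with
  | mem t ht => exact hT t ht
  | zero => simp [A.one_mem]
  | add u v _ _ hu hv =>
    rw [← mul_one (1 : R), ← monomial_mul]
    exact A.mul_mem hu hv

lemma mem_of_forall_monomial_one_mem {g : MvPolynomial σ R}
    (hg : ∀ u ∈ g.support, monomial u (1 : R) ∈ A) : g ∈ A := by
  rw [g.as_sum]
  refine A.sum_mem fun u hu => ?_
  rw [← mul_one (coeff u g), ← smul_eq_mul, ← smul_monomial]
  exact A.smul_mem (hg u hu) _

end MonomialSubalgebra

theorem kleinschmidt_surjhom_general {k : Type*} [Field k] (d s : ℕ) (a : Fin s → ℕ) :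
    (∀ (b : Fin 2 → ℕ) (u : Fin (d + 2) →₀ ℕ),
      wdeg (kw d s a) u = (fun j => (b j : ℤ)) →
      ∃ (f : Fin (b 0) → (Fin (d + 2) →₀ ℕ)) (g : Fin (b 1) → (Fin (d + 2) →₀ ℕ)),
        (∀ p, wdeg (kw d s a) (f p) = ![(1 : ℤ), 0]) ∧
        (∀ q, wdeg (kw d s a) (g q) = ![(0 : ℤ), 1]) ∧
        u = (∑ p, f p) + ∑ q, g q) ∧
    (∀ (nn mm : ℕ) (e₁ : Fin (nn + 1) → (Fin (d + 2) →₀ ℕ))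
        (e₂ : Fin (mm + 1) → (Fin (d + 2) →₀ ℕ)),
      Function.Injective e₁ →
      Set.range e₁ = {u | wdeg (kw d s a) u = ![(1 : ℤ), 0]} →
      Function.Injective e₂ →
      Set.range e₂ = {u | wdeg (kw d s a) u = ![(0 : ℤ), 1]} →
      ∀ (b : Fin 2 → ℕ) (g : MvPolynomial (Fin (d + 2)) k),
        g.IsWeightedHomogeneous (kw d s a) (fun j => (b j : ℤ)) →
        g ∈ (MvPolynomial.aeval (R := k)
          (Sum.elim (fun p => (monomial (e₁ p) (1 : k)))
            (fun q => (monomial (e₂ q) (1 : k))) :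
            Fin (nn + 1) ⊕ Fin (mm + 1) → MvPolynomial (Fin (d + 2)) k)).range) := by
  refine ⟨exists_fin_sum_of_wdeg_kw_eq, fun nn mm e₁ e₂ _ he₁ _ he₂ b g hg => ?_⟩
  refine mem_of_forall_monomial_one_mem fun u hu => ?_
  obtain ⟨f, f', hf, hf', rfl⟩ :=
    exists_fin_sum_of_wdeg_kw_eq b u (hg (MvPolynomial.mem_support_iff.1 hu))
  refine monomial_one_mem_of_mem_closure (T := Set.range e₁ ∪ Set.range e₂) ?_ ?_
  · rintro _ (⟨p, rfl⟩ | ⟨q, rfl⟩)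
    · exact ⟨X (Sum.inl p), by simp⟩
    · exact ⟨X (Sum.inr q), by simp⟩
  · refine add_mem (sum_mem fun p _ => ?_) (sum_mem fun q _ => ?_) <;>
      apply AddSubmonoid.subset_closure
    · exact Or.inl (he₁ ▸ hf p)
    · exact Or.inr (he₂ ▸ hf' q)

/-- **Lemma `surjhom` (Kleinschmidt, Picard rank 2).** In the Cox ring
`R = k[z_1,…,z_{d+2}]` of `X_d(a)`: (1) every monomial of degree `(b₁,b₂) ∈ ℕ²` is a product of
`b₁` monomials of degree `(1,0)` and `b₂` monomials of degree `(0,1)`; (2) consequently, for any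
enumerations `e₁`, `e₂` of the monomial bases of `R_{(1,0)}` and `R_{(0,1)}`, the `k`-algebra map
`ψ : Cox(P^nn × P^mm) → R` sending the variables to these monomials hits every `ℕ²`-homogeneous
element of `R`, i.e. `ψ` surjects onto `⊕_{b ∈ ℕ²} R_b`. -/
theorem kleinschmidt_surjhom {k : Type*} [Field k] (d s : ℕ) (hd : 2 ≤ d)
    (hs1 : 1 ≤ s) (hs2 : s ≤ d - 1) (a : Fin s → ℕ) (hmono : Monotone a) :
    (∀ (b : Fin 2 → ℕ) (u : Fin (d + 2) →₀ ℕ),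
      wdeg (kw d s a) u = (fun j => (b j : ℤ)) →
      ∃ (f : Fin (b 0) → (Fin (d + 2) →₀ ℕ)) (g : Fin (b 1) → (Fin (d + 2) →₀ ℕ)),
        (∀ p, wdeg (kw d s a) (f p) = ![(1 : ℤ), 0]) ∧
        (∀ q, wdeg (kw d s a) (g q) = ![(0 : ℤ), 1]) ∧
        u = (∑ p, f p) + ∑ q, g q) ∧
    (∀ (nn mm : ℕ) (e₁ : Fin (nn + 1) → (Fin (d + 2) →₀ ℕ))
        (e₂ : Fin (mm + 1) → (Fin (d + 2) →₀ ℕ)),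
      Function.Injective e₁ →
      Set.range e₁ = {u | wdeg (kw d s a) u = ![(1 : ℤ), 0]} →
      Function.Injective e₂ →
      Set.range e₂ = {u | wdeg (kw d s a) u = ![(0 : ℤ), 1]} →
      ∀ (b : Fin 2 → ℕ) (g : MvPolynomial (Fin (d + 2)) k),
        g.IsWeightedHomogeneous (kw d s a) (fun j => (b j : ℤ)) →
        g ∈ (MvPolynomial.aeval (R := k)
          (Sum.elim (fun p => (monomial (e₁ p) (1 : k)))
            (fun q => (monomial (e₂ q) (1 : k))) :
            Fin (nn + 1) ⊕ Fin (mm + 1) → MvPolynomial (Fin (d + 2)) k)).range) :=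
  kleinschmidt_surjhom_general d s a

end Gotzmann
end

section
/- In the Cox ring T = k[x_0,x_1,x_2,y_0,y_1,y_2,y_3] of P^2 × P^3 (deg x_i = (1,0), deg y_j = (0,1)), the saturated bilex ideals I = (x_0, y_0, y_1^2, x_1 y_1, x_1 y_2^3) and J = (y_0, x_0 y_1, x_0 y_2, x_1 y_1, x_1 y_2, y_1^3, y_1^2 y_2) satisfy H_I(t_1,t_2) = H_J(t_1,t_2) for all (t_1,t_2) ∈ {(1,3),(2,3),(1,4),(2,4)}, but H_I(3,3) = 16 ≠ 17 = H_J(3,3); in particular I and J have distinct Hilbert polynomials, namely P_I(t_1,t_2) = 3t_1 + 2t_2 + 1 and P_J(t_1,t_2) = t_1^2/2 + 3t_1/2 + 2t_2 + 2. -/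
open MvPolynomial

namespace Gotzmann

/-- The bigrading of `T = k[x₀,x₁,x₂,y₀,y₁,y₂,y₃] = Cox(P² × P³)`:
`deg xᵢ = (1,0)`, `deg yⱼ = (0,1)`. -/
def w17 : Fin 3 ⊕ Fin 4 → (Fin 2 → ℕ) :=
  Sum.elim (fun _ => ![1, 0]) (fun _ => ![0, 1])

/-!
Both ideals are monomial, so `H(t)` counts the monomials of bidegree `t` outside the ideal. For
`t₂ ≥ 2` these are, for `I`, the monomials `x₂^{t₁} y₁^e y₂^c y₃^d` with `e ≤ 1` and
`x₁^a x₂^{t₁-a} y₂^c y₃^{t₂-c}` with `a ≥ 1`, `c ≤ 2`, so `H_I(t) = 3t₁ + 2t₂ + 1`; for `J`, every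
`x`-monomial times `y₃^{t₂}` together with `x₂^{t₁}` times the monomials in `y₁, y₂, y₃` other than
`y₃^{t₂}` avoiding `y₁³` and `y₁²y₂`, so `H_J(t) = C(t₁+2, 2) + 2t₂ + 1`. Both closed forms hold on
the whole half-plane `t₂ ≥ 2`, which contains all the degrees in question.
-/

section MonomialIdeal

variable {R σ : Type*} [CommSemiring R]

theorem monomial_one_mem_span_monomial_image {S : Set (σ →₀ ℕ)} {m u : σ →₀ ℕ} (hm : m ∈ S)
    (hmu : m ≤ u) : monomial u (1 : R) ∈ Ideal.span ((fun m => monomial m (1 : R)) '' S) := by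
  rw [show monomial u (1 : R) = monomial (u - m) 1 * monomial m 1 by
    rw [monomial_mul, one_mul, tsub_add_cancel_of_le hmu]]
  exact Ideal.mul_mem_left _ _ (Ideal.subset_span ⟨m, hm, rfl⟩)

theorem restrictSupport_le_span_monomial_image (S : Set (σ →₀ ℕ)) :
    restrictSupport R {u | ∃ m ∈ S, m ≤ u} ≤
      (Ideal.span ((fun m => monomial m (1 : R)) '' S)).restrictScalars R := by
  rw [restrictSupport_eq_span, Submodule.span_le]
  rintro _ ⟨u, ⟨m, hm, hmu⟩, rfl⟩
  exact monomial_one_mem_span_monomial_image hm hmu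

theorem disjoint_restrictSupport_span_monomial_image (S : Set (σ →₀ ℕ)) :
    Disjoint (restrictSupport R {u | ∀ m ∈ S, ¬ m ≤ u})
      ((Ideal.span ((fun m => monomial m (1 : R)) '' S)).restrictScalars R) := by
  rw [Submodule.disjoint_def]
  intro p hp hpI
  rw [Submodule.restrictScalars_mem, mem_ideal_span_monomial_image] at hpI
  by_contra hp0
  obtain ⟨u, hu⟩ := support_nonempty.mpr hp0
  obtain ⟨m, hm, hmu⟩ := hpI u hu
  exact (mem_restrictSupport_iff _).mp hp hu m hm hmu

/-- The images of the standard monomials of degree `b` form a basis of the degree-`b` part of the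
quotient. -/
theorem hilb_span_monomial_image {k M : Type*} [Field k] [AddCommMonoid M] (w : σ → M)
    (S : Set (σ →₀ ℕ)) (b : M) (F : Finset (σ →₀ ℕ))
    (hF : ∀ u, u ∈ F ↔ Finsupp.weight w u = b ∧ ∀ m ∈ S, ¬ m ≤ u) :
    hilb k w (Ideal.span ((fun m => monomial m (1 : k)) '' S)) b = F.card := by
  set I := Ideal.span ((fun m => monomial m (1 : k)) '' S)
  set Q := (Ideal.Quotient.mkₐ k I).toLinearMap
  have hQ : ∀ p, Q p = 0 ↔ p ∈ I.restrictScalars k := fun p => Ideal.Quotient.eq_zero_iff_mem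
  have hsplit : weightedHomogeneousSubmodule k w b ≤
      restrictSupport k F ⊔ restrictSupport k {u | ∃ m ∈ S, m ≤ u} := by
    rw [weightedHomogeneousSubmodule_eq_finsupp_supported, restrictSupport_eq_span,
      restrictSupport_eq_span, ← Submodule.span_union, ← Set.image_union,
      ← restrictSupport_eq_span]
    refine restrictSupport_mono _ fun u hu => ?_
    by_cases h : ∃ m ∈ S, m ≤ u
    · exact Or.inr h
    · push Not at h
      exact Or.inl ((hF u).mpr ⟨hu, h⟩)
  have hmap : (weightedHomogeneousSubmodule k w b).map Q = (restrictSupport k F).map Q := by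
    refine le_antisymm ((Submodule.map_mono hsplit).trans ?_) (Submodule.map_mono ?_)
    · rw [Submodule.map_sup]
      refine sup_le le_rfl ((Submodule.map_le_iff_le_comap.mpr fun p hp => ?_).trans bot_le)
      exact (Submodule.mem_bot k).mpr ((hQ p).mpr (restrictSupport_le_span_monomial_image S hp))
    · rw [weightedHomogeneousSubmodule_eq_finsupp_supported]
      exact restrictSupport_mono _ fun u hu => ((hF u).mp hu).1
  have hinj : Function.Injective (Q.domRestrict (restrictSupport k F)) := by
    rw [LinearMap.injective_domRestrict_iff]
    refine ((disjoint_restrictSupport_span_monomial_image S).mono_left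
      (restrictSupport_mono _ fun u hu => ((hF u).mp hu).2)).mono_right fun p hp => ?_
    exact (hQ p).mp hp
  rw [hilb, hmap, ← LinearMap.range_domRestrict, LinearMap.finrank_range_of_inj hinj,
    Module.finrank_eq_card_basis (basisRestrictSupport k _)]
  simp

end MonomialIdeal

theorem single_add_single_le_iff {α : Type*} {i j : α} (hij : i ≠ j) {a b : ℕ}
    {u : α →₀ ℕ} : Finsupp.single i a + Finsupp.single j b ≤ u ↔ a ≤ u i ∧ b ≤ u j := by
  refine ⟨fun h => ⟨by simpa [hij] using h i, by simpa [hij.symm] using h j⟩,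
    fun ⟨hi, hj⟩ v => ?_⟩
  rcases eq_or_ne v i with rfl | hvi
  · simpa [hij] using hi
  rcases eq_or_ne v j with rfl | hvj
  · simpa [hvi] using hj
  simp [hvi.symm, hvj.symm]

section CoxRing

open Finset Finsupp Sum

theorem weight_w17_eq_iff (u : Fin 3 ⊕ Fin 4 →₀ ℕ) (t1 t2 : ℕ) :
    weight w17 u = ![t1, t2] ↔ u (inl 0) + u (inl 1) + u (inl 2) = t1 ∧
      u (inr 0) + u (inr 1) + u (inr 2) + u (inr 3) = t2 := by
  rw [weight_apply, Finsupp.sum_fintype _ _ (by simp), funext_iff, Fin.forall_fin_two]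
  simp [Fintype.sum_sum_type, Fin.sum_univ_three, Fin.sum_univ_four, w17]

noncomputable def mkExp (a : Fin 3 → ℕ) (b : Fin 4 → ℕ) : Fin 3 ⊕ Fin 4 →₀ ℕ :=
  equivFunOnFinite.symm (Sum.elim a b)

@[simp] theorem mkExp_inl (a : Fin 3 → ℕ) (b : Fin 4 → ℕ) (i : Fin 3) :
    mkExp a b (inl i) = a i := rfl

@[simp] theorem mkExp_inr (a : Fin 3 → ℕ) (b : Fin 4 → ℕ) (j : Fin 4) :
    mkExp a b (inr j) = b j := rfl

def genExpI : Set (Fin 3 ⊕ Fin 4 →₀ ℕ) :=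
  {single (inl 0) 1, single (inr 0) 1, single (inr 1) 2, single (inl 1) 1 + single (inr 1) 1,
    single (inl 1) 1 + single (inr 2) 3}

theorem span_genI_eq {R : Type*} [CommSemiring R] :
    Ideal.span ({X (inl 0), X (inr 0), X (inr 1) ^ 2, X (inl 1) * X (inr 1),
      X (inl 1) * X (inr 2) ^ 3} : Set (MvPolynomial (Fin 3 ⊕ Fin 4) R)) =
      Ideal.span ((fun m => monomial m (1 : R)) '' genExpI) := by
  simp only [X_pow_eq_monomial]
  simp [genExpI, Set.image_insert_eq, X, monomial_mul]

theorem forall_genExpI_not_le_iff (u : Fin 3 ⊕ Fin 4 →₀ ℕ) :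
    (∀ m ∈ genExpI, ¬ m ≤ u) ↔ u (inl 0) = 0 ∧ u (inr 0) = 0 ∧ u (inr 1) ≤ 1 ∧
      (u (inl 1) = 0 ∨ u (inr 1) = 0) ∧ (u (inl 1) = 0 ∨ u (inr 2) ≤ 2) := by
  simp [genExpI, single_add_single_le_iff]
  omega

/-- `(a₁, b₁, b₂)` stands for `x₁^{a₁} x₂^{t₁-a₁} y₁^{b₁} y₂^{b₂} y₃^{t₂-b₁-b₂}`. -/
def paramsI (t1 t2 : ℕ) : Finset (ℕ × ℕ × ℕ) :=
  {0} ×ˢ ({0} ×ˢ range (t2 + 1) ∪ {1} ×ˢ range t2) ∪ Icc 1 t1 ×ˢ {0} ×ˢ range 3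

theorem card_paramsI (t1 t2 : ℕ) : (paramsI t1 t2).card = 3 * t1 + 2 * t2 + 1 := by
  rw [paramsI, card_union_of_disjoint, card_product, card_union_of_disjoint]
  · simp
    ring
  all_goals simp [disjoint_left] <;> omega

noncomputable def stdMonI (t1 t2 : ℕ) : Finset (Fin 3 ⊕ Fin 4 →₀ ℕ) :=
  (paramsI t1 t2).image fun p => mkExp ![0, p.1, t1 - p.1] ![0, p.2.1, p.2.2, t2 - p.2.1 - p.2.2]

theorem card_stdMonI (t1 t2 : ℕ) : (stdMonI t1 t2).card = 3 * t1 + 2 * t2 + 1 := by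
  rw [stdMonI, card_image_of_injective, card_paramsI]
  intro p q h
  have h1 := DFunLike.congr_fun h (inl 1)
  have h2 := DFunLike.congr_fun h (inr 1)
  have h3 := DFunLike.congr_fun h (inr 2)
  simp only [mkExp_inl, mkExp_inr, Matrix.cons_val_one, Matrix.cons_val_zero,
    Matrix.cons_val] at h1 h2 h3
  simp [Prod.ext_iff, h1, h2, h3]

theorem mem_stdMonI_iff {t1 t2 : ℕ} (ht2 : 2 ≤ t2) (u : Fin 3 ⊕ Fin 4 →₀ ℕ) :
    u ∈ stdMonI t1 t2 ↔ weight w17 u = ![t1, t2] ∧ ∀ m ∈ genExpI, ¬ m ≤ u := by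
  rw [weight_w17_eq_iff, forall_genExpI_not_le_iff]
  constructor
  · intro hu
    obtain ⟨⟨a1, b1, b2⟩, hp, rfl⟩ := mem_image.mp hu
    simp [paramsI] at hp ⊢
    omega
  · rintro ⟨hw, hs⟩
    refine mem_image.mpr ⟨(u (inl 1), u (inr 1), u (inr 2)), ?_, ?_⟩
    · simp [paramsI]
      omega
    · ext (i | j)
      · fin_cases i <;> simp <;> omega
      · fin_cases j <;> simp <;> omega

theorem hilb_I {k : Type*} [Field k] {t1 t2 : ℕ} (ht2 : 2 ≤ t2) :
    hilb k w17 (Ideal.span {X (inl 0), X (inr 0), X (inr 1) ^ 2, X (inl 1) * X (inr 1),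
      X (inl 1) * X (inr 2) ^ 3}) ![t1, t2] = 3 * t1 + 2 * t2 + 1 := by
  rw [span_genI_eq, hilb_span_monomial_image w17 genExpI _ _ (mem_stdMonI_iff ht2),
    card_stdMonI]

def genExpJ : Set (Fin 3 ⊕ Fin 4 →₀ ℕ) :=
  {single (inr 0) 1, single (inl 0) 1 + single (inr 1) 1, single (inl 0) 1 + single (inr 2) 1,
    single (inl 1) 1 + single (inr 1) 1, single (inl 1) 1 + single (inr 2) 1, single (inr 1) 3,
    single (inr 1) 2 + single (inr 2) 1}

theorem span_genJ_eq {R : Type*} [CommSemiring R] :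
    Ideal.span ({X (inr 0), X (inl 0) * X (inr 1), X (inl 0) * X (inr 2), X (inl 1) * X (inr 1),
      X (inl 1) * X (inr 2), X (inr 1) ^ 3, X (inr 1) ^ 2 * X (inr 2)} :
      Set (MvPolynomial (Fin 3 ⊕ Fin 4) R)) =
      Ideal.span ((fun m => monomial m (1 : R)) '' genExpJ) := by
  simp only [X_pow_eq_monomial]
  simp [genExpJ, Set.image_insert_eq, X, monomial_mul]

theorem forall_genExpJ_not_le_iff (u : Fin 3 ⊕ Fin 4 →₀ ℕ) :
    (∀ m ∈ genExpJ, ¬ m ≤ u) ↔ u (inr 0) = 0 ∧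
      (u (inl 0) = 0 ∧ u (inl 1) = 0 ∨ u (inr 1) = 0 ∧ u (inr 2) = 0) ∧
      u (inr 1) ≤ 2 ∧ (u (inr 1) ≤ 1 ∨ u (inr 2) = 0) := by
  simp [genExpJ, single_add_single_le_iff]
  omega

def yParamsJ (t2 : ℕ) : Finset (ℕ × ℕ) :=
  {0} ×ˢ Icc 1 t2 ∪ {1} ×ˢ range t2 ∪ {(2, 0)}

theorem card_yParamsJ (t2 : ℕ) : (yParamsJ t2).card = 2 * t2 + 1 := by
  rw [yParamsJ, card_union_of_disjoint, card_union_of_disjoint]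
  · simp
    ring
  all_goals
    simp [disjoint_left]
    omega

/-- `(f, b₁, b₂)` stands for `x^f y₁^{b₁} y₂^{b₂} y₃^{t₂-b₁-b₂}`; `yParamsJ` omits `(0, 0)`, so
that `x₂^{t₁} y₃^{t₂}` is counted only in the first piece. -/
noncomputable def paramsJ (t1 t2 : ℕ) : Finset ((Fin 3 →₀ ℕ) × ℕ × ℕ) :=
  univ.finsuppAntidiag t1 ×ˢ {(0, 0)} ∪ {single 2 t1} ×ˢ yParamsJ t2

theorem card_paramsJ (t1 t2 : ℕ) : (paramsJ t1 t2).card = (t1 + 2).choose 2 + 2 * t2 + 1 := by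
  rw [paramsJ, card_union_of_disjoint, card_product, card_product,
    card_finsuppAntidiag_nat_eq_choose, card_yParamsJ]
  · simp only [card_univ, Fintype.card_fin, card_singleton]
    rw [show 3 + t1 - 1 = t1 + 2 by omega, Nat.choose_symm_add]
    ring
  · simp [disjoint_left, yParamsJ]
    omega

noncomputable def stdMonJ (t1 t2 : ℕ) : Finset (Fin 3 ⊕ Fin 4 →₀ ℕ) :=
  (paramsJ t1 t2).image fun p => mkExp p.1 ![0, p.2.1, p.2.2, t2 - p.2.1 - p.2.2]

theorem card_stdMonJ (t1 t2 : ℕ) : (stdMonJ t1 t2).card = (t1 + 2).choose 2 + 2 * t2 + 1 := by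
  rw [stdMonJ, card_image_of_injective, card_paramsJ]
  intro p q h
  have h1 := DFunLike.congr_fun h (inr 1)
  have h2 := DFunLike.congr_fun h (inr 2)
  simp only [mkExp_inr, Matrix.cons_val_one, Matrix.cons_val_zero, Matrix.cons_val] at h1 h2
  refine Prod.ext (Finsupp.ext fun i => ?_) (Prod.ext h1 h2)
  simpa using DFunLike.congr_fun h (inl i)

theorem mem_stdMonJ_iff {t1 t2 : ℕ} (ht2 : 2 ≤ t2) (u : Fin 3 ⊕ Fin 4 →₀ ℕ) :
    u ∈ stdMonJ t1 t2 ↔ weight w17 u = ![t1, t2] ∧ ∀ m ∈ genExpJ, ¬ m ≤ u := by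
  rw [weight_w17_eq_iff, forall_genExpJ_not_le_iff]
  constructor
  · intro hu
    obtain ⟨⟨f, b1, b2⟩, hp, rfl⟩ := mem_image.mp hu
    simp [paramsJ, yParamsJ, mem_finsuppAntidiag, Fin.sum_univ_three] at hp ⊢
    simp [Finsupp.ext_iff, Fin.forall_fin_succ] at hp
    omega
  · rintro ⟨hw, hs⟩
    refine mem_image.mpr
      ⟨(equivFunOnFinite.symm fun i => u (inl i), u (inr 1), u (inr 2)), ?_, ?_⟩
    · simp [paramsJ, yParamsJ, mem_finsuppAntidiag, Fin.sum_univ_three]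
      simp [Finsupp.ext_iff, Fin.forall_fin_succ]
      omega
    · ext (i | j)
      · simp
      · fin_cases j <;> simp <;> omega

theorem hilb_J {k : Type*} [Field k] {t1 t2 : ℕ} (ht2 : 2 ≤ t2) :
    hilb k w17 (Ideal.span {X (inr 0), X (inl 0) * X (inr 1), X (inl 0) * X (inr 2),
      X (inl 1) * X (inr 1), X (inl 1) * X (inr 2), X (inr 1) ^ 3, X (inr 1) ^ 2 * X (inr 2)})
      ![t1, t2] = (t1 + 2).choose 2 + 2 * t2 + 1 := by
  rw [span_genJ_eq, hilb_span_monomial_image w17 genExpJ _ _ (mem_stdMonJ_iff ht2),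
    card_stdMonJ]

end CoxRing

theorem isHilbPoly_of_forall_le_snd {k : Type*} [Field k] {σ : Type*} (w : σ → (Fin 2 → ℕ))
    (I : Ideal (MvPolynomial σ k)) (P : MvPolynomial (Fin 2) ℚ) (N : ℕ)
    (h : ∀ t1 t2 : ℕ, N ≤ t2 → eval ![(t1 : ℚ), t2] P = hilb k w I ![t1, t2]) :
    IsHilbPoly k w I P := by
  refine ⟨N, fun b hb => ?_⟩
  have hb' : b = ![b 0, b 1] := by ext i; fin_cases i <;> rfl
  have hbℚ : (fun i => (b i : ℚ)) = ![(b 0 : ℚ), b 1] := by ext i; fin_cases i <;> rfl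
  rw [hbℚ, h _ _ (hb 1), ← hb']

/-- **Example 3.17.** In `T = Cox(P² × P³)`, the ideals
`I = (x₀, y₀, y₁², x₁y₁, x₁y₂³)` and `J = (y₀, x₀y₁, x₀y₂, x₁y₁, x₁y₂, y₁³, y₁²y₂)` have equal
Hilbert functions at `(1,3), (2,3), (1,4), (2,4)` but `H_I(3,3) = 16 ≠ 17 = H_J(3,3)`; their
Hilbert polynomials are the distinct polynomials `3t₁ + 2t₂ + 1` and
`t₁²/2 + 3t₁/2 + 2t₂ + 2`. -/
theorem bilex_square_not_enough {k : Type*} [Field k] :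
    let x : Fin 3 → MvPolynomial (Fin 3 ⊕ Fin 4) k := fun i => X (Sum.inl i)
    let y : Fin 4 → MvPolynomial (Fin 3 ⊕ Fin 4) k := fun j => X (Sum.inr j)
    let I : Ideal (MvPolynomial (Fin 3 ⊕ Fin 4) k) :=
      Ideal.span {x 0, y 0, y 1 ^ 2, x 1 * y 1, x 1 * y 2 ^ 3}
    let J : Ideal (MvPolynomial (Fin 3 ⊕ Fin 4) k) :=
      Ideal.span {y 0, x 0 * y 1, x 0 * y 2, x 1 * y 1, x 1 * y 2, y 1 ^ 3, y 1 ^ 2 * y 2}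
    (∀ t : Fin 2 → ℕ, t ∈ ({![1, 3], ![2, 3], ![1, 4], ![2, 4]} : Set (Fin 2 → ℕ)) →
        hilb k w17 I t = hilb k w17 J t) ∧
    hilb k w17 I ![3, 3] = 16 ∧
    hilb k w17 J ![3, 3] = 17 ∧
    IsHilbPoly k w17 I (3 * X 0 + 2 * X 1 + 1) ∧
    IsHilbPoly k w17 J
      (MvPolynomial.C (1 / 2 : ℚ) * X 0 ^ 2 + MvPolynomial.C (3 / 2 : ℚ) * X 0 +
        2 * X 1 + 2) := by
  intro x y I J
  have hI : ∀ t1 t2 : ℕ, 2 ≤ t2 → hilb k w17 I ![t1, t2] = 3 * t1 + 2 * t2 + 1 :=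
    fun _ _ => hilb_I
  have hJ : ∀ t1 t2 : ℕ, 2 ≤ t2 → hilb k w17 J ![t1, t2] = (t1 + 2).choose 2 + 2 * t2 + 1 :=
    fun _ _ => hilb_J
  refine ⟨?_, hI 3 3 (by norm_num), hJ 3 3 (by norm_num), ?_, ?_⟩
  · rintro t (rfl | rfl | rfl | rfl) <;>
      rw [hI _ _ (by norm_num), hJ _ _ (by norm_num)] <;> rfl
  · refine isHilbPoly_of_forall_le_snd w17 I _ 2 fun t1 t2 ht2 => ?_
    rw [hI t1 t2 ht2]
    simp
  · refine isHilbPoly_of_forall_le_snd w17 J _ 2 fun t1 t2 ht2 => ?_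
    rw [hJ t1 t2 ht2]
    push_cast [Nat.cast_choose_two]
    simp
    ring

end Gotzmann
end
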